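/- arXiv:1105.3414 — 3 statements merged into one kernel-verified Lean document; each statement's English description precedes it below -/
import Mathlib

section
/- Eliminating a negative weight from a weight constraint preserves satisfaction: if W is a weight constraint of the form l [a_1=w_{a_1},...,a_n=w_{a_n}, not b_1=w_{b_1},...,not b_m=w_{b_m}] u with w_{a_1} < 0, and W' is obtained from W by replacing the entry a_1=w_{a_1} with not a_1=|w_{a_1}| and increasing both bounds to l+|w_{a_1}| and u+|w_{a_1}|, then for every set of atoms M, M satisfies W if and only if M satisfies W'. -/
open Finset

/-- Eliminating a negative weight from a weight constraint preserves satisfaction: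
`W = l [a₁=w_{a₁},...,aₙ=w_{aₙ}, not b₁=w_{b₁},...,not bₘ=w_{bₘ}] u` with `w_{a₁} < 0`,
and `W'` replaces the entry `a₁ = w_{a₁}` by `not a₁ = |w_{a₁}|` and increases both
bounds by `|w_{a₁}|`.  Then `M ⊨ W ↔ M ⊨ W'`. -/
theorem negWeight_elim_sat {α : Type*} [DecidableEq α]
    (a1 : α) (A B : Finset α) (ha1A : a1 ∉ A)
    (wa wb : α → ℝ) (l u : ℝ) (hneg : wa a1 < 0) (M : Finset α) :
    (l ≤ (∑ a ∈ (insert a1 A) ∩ M, wa a) + (∑ b ∈ B \ M, wb b) ∧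
      (∑ a ∈ (insert a1 A) ∩ M, wa a) + (∑ b ∈ B \ M, wb b) ≤ u) ↔
    (l + |wa a1| ≤
        (∑ a ∈ A ∩ M, wa a) + (if a1 ∈ M then 0 else |wa a1|) + (∑ b ∈ B \ M, wb b) ∧
      (∑ a ∈ A ∩ M, wa a) + (if a1 ∈ M then 0 else |wa a1|) + (∑ b ∈ B \ M, wb b) ≤
        u + |wa a1|) := by
  have habs : |wa a1| = -wa a1 := abs_of_neg hneg
  by_cases h : a1 ∈ M
  · have h2 : ∑ a ∈ (insert a1 A) ∩ M, wa a = wa a1 + ∑ a ∈ A ∩ M, wa a := by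
      rw [Finset.insert_inter_of_mem h, Finset.sum_insert (by simp [ha1A])]
    simp only [if_pos h, h2, habs]
    constructor <;> rintro ⟨h3, h4⟩ <;> constructor <;> linarith
  · rw [Finset.insert_inter_of_notMem h]
    simp only [if_neg h, habs]
    constructor <;> rintro ⟨h3, h4⟩ <;> constructor <;> linarith
end

section
/- The strongly satisfiable encoding is satisfaction-preserving: for any weight constraint W with nonnegative weights and any set of atoms M, M ⊨ W if and only if M ⊨ W_l and M ⊨ W_u, where (W_l, W_u) is the strongly satisfiable encoding of W. -/
open Finset

/-- The strongly satisfiable encoding is satisfaction-preserving: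
`M ⊨ W` iff `M ⊨ W_l` and `M ⊨ W_u`. -/
theorem strongEncoding_sat_preserving {α : Type*} [DecidableEq α]
    (A B : Finset α) (wa wb : α → ℝ)
    (hwa : ∀ a, 0 ≤ wa a) (hwb : ∀ b, 0 ≤ wb b)
    (l u : ℝ) (M : Finset α) :
    (l ≤ (∑ a ∈ A ∩ M, wa a) + (∑ b ∈ B \ M, wb b) ∧
      (∑ a ∈ A ∩ M, wa a) + (∑ b ∈ B \ M, wb b) ≤ u) ↔
    ((l ≤ (∑ a ∈ A ∩ M, wa a) + (∑ b ∈ B \ M, wb b)) ∧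
      (-u + (∑ a ∈ A, wa a) + (∑ b ∈ B, wb b) ≤
        (∑ a ∈ A \ M, wa a) + (∑ b ∈ B ∩ M, wb b))) := by
  have h1 := Finset.sum_inter_add_sum_sdiff A M wa
  have h2 := Finset.sum_inter_add_sum_sdiff B M wb
  constructor <;> rintro ⟨ha, hb⟩ <;> exact ⟨ha, by linarith⟩
end

section
/- If M is an answer set of a basic weight constraint program P, then M is not circularly justified: there is no nonempty U ⊆ M such that for every atom φ ∈ U, M \ U fails to satisfy the body of every rule of P with head φ. -/
open Finset
open scoped Classical

/-- A weight constraint `l [a=wa …, not b=wb …] u`. -/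
structure WC (α : Type*) where
  pos : Finset α
  neg : Finset α
  wa : α → ℝ
  wb : α → ℝ
  l : ℝ
  u : ℝ

variable {α : Type*} [DecidableEq α]

/-- `w(W,M) = Σ_{a ∈ M} w_a + Σ_{b ∉ M} w_b`. -/
def wgt (W : WC α) (M : Finset α) : ℝ :=
  (∑ a ∈ W.pos ∩ M, W.wa a) + (∑ b ∈ W.neg \ M, W.wb b)

/-- `M ⊨ W` iff `l ≤ w(W,M) ≤ u`. -/
def wsat (W : WC α) (M : Finset α) : Prop := W.l ≤ wgt W M ∧ wgt W M ≤ W.u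

/-- The domain of `W`. -/
def wdom (W : WC α) : Finset α := W.pos ∪ W.neg

/-- Conditional satisfaction `S ⊨_M W`. -/
def condSat (S : Set α) (M : Finset α) (W : WC α) : Prop :=
  ∀ I : Finset α, S ∩ ↑(wdom W) ⊆ ↑I → (↑I : Set α) ⊆ ↑M ∩ ↑(wdom W) → wsat W I

/-- Satisfaction of the reduct `W^M` by `S`:
`Σ_{a ∈ S} w_a ≥ l - Σ_{b ∉ M} w_b`. -/
def redSat (S : Set α) (M : Finset α) (W : WC α) : Prop :=
  W.l - (∑ b ∈ W.neg \ M, W.wb b) ≤ ∑ a ∈ W.pos.filter (· ∈ S), W.wa a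

/-- The operator `K_P(·, M)` based on conditional satisfaction. -/
def Kop (P : Set (α × List (WC α))) (M : Finset α) (R : Set α) : Set α :=
  {a | ∃ r ∈ P, r.1 = a ∧ ∀ W ∈ r.2, condSat R M W}

/-- Iterates of `K_P(·, M)` from `∅`. -/
def Kiter (P : Set (α × List (WC α))) (M : Finset α) : ℕ → Set α
  | 0 => ∅
  | n + 1 => Kop P M (Kiter P M n)

/-- The immediate-consequence operator `T_{P^M}` of the reduct `P^M`. -/
def TopR (P : Set (α × List (WC α))) (M : Finset α) (S : Set α) : Set α :=
  {a | ∃ r ∈ P, r.1 = a ∧ a ∈ M ∧ (∀ W ∈ r.2, wgt W M ≤ W.u) ∧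
        ∀ W ∈ r.2, redSat S M W}

/-- Iterates of `T_{P^M}` from `∅`. -/
def Titer (P : Set (α × List (WC α))) (M : Finset α) : ℕ → Set α
  | 0 => ∅
  | n + 1 => TopR P M (Titer P M n)

lemma wgt_inter_wdom (W : WC α) (S : Finset α) : wgt W (S ∩ wdom W) = wgt W S := by
  unfold wgt
  congr 1
  · apply Finset.sum_congr _ (fun _ _ => rfl)
    ext x; simp [wdom]; tauto
  · apply Finset.sum_congr _ (fun _ _ => rfl)
    ext x; simp [wdom]; tauto

/-- If `M` is an answer set of a basic weight constraint program `P`, then `M`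
is not circularly justified: there is no nonempty `U ⊆ M` such that for every
`φ ∈ U`, `M \ U` fails to satisfy the body of every rule of `P` with head `φ`. -/
theorem answerSet_not_circular
    (P : Set (α × List (WC α))) (M : Finset α)
    (hmodel : ∀ r ∈ P, (∀ W ∈ r.2, wsat W M) → r.1 ∈ M)
    (hans : (↑M : Set α) = ⋃ n, Kiter P M n) :
    ¬ ∃ U : Finset α, U ⊆ M ∧ U.Nonempty ∧
        ∀ φ ∈ U, ∀ r ∈ P, r.1 = φ → ¬ (∀ W ∈ r.2, wsat W (M \ U)) := by
  rintro ⟨U, hUM, hUne, hcirc⟩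
  have hKM : ∀ n, Kiter P M n ⊆ (M : Set α) := fun n => hans ▸ Set.subset_iUnion _ n
  have key : ∀ n, ∀ φ ∈ U, φ ∉ Kiter P M n := by
    intro n
    induction n with
    | zero => intro φ _ h; exact h
    | succ m ih =>
      intro φ hφ hK
      obtain ⟨r, hr, hhead, hcond⟩ := hK
      refine hcirc φ hφ r hr hhead ?_
      intro W hW
      have hsub : Kiter P M m ⊆ ((M \ U : Finset α) : Set α) := by
        intro x hx
        have hxM := hKM m hx
        simp only [Finset.coe_sdiff, Set.mem_diff]
        exact ⟨hxM, fun hxU => ih x hxU hx⟩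
      have hws := hcond W hW ((M \ U) ∩ wdom W) ?_ ?_
      · unfold wsat at hws ⊢
        rwa [wgt_inter_wdom] at hws
      · intro x hx
        obtain ⟨hx1, hx2⟩ := hx
        simp only [Finset.coe_inter, Set.mem_inter_iff]
        exact ⟨hsub hx1, hx2⟩
      · intro x hx
        simp only [Finset.coe_inter, Finset.coe_sdiff, Set.mem_inter_iff, Set.mem_diff] at hx ⊢
        exact ⟨hx.1.1, hx.2⟩
  obtain ⟨φ, hφ⟩ := hUne
  have hφM : (φ : α) ∈ (M : Set α) := hUM hφ
  rw [hans] at hφM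
  obtain ⟨_, ⟨n, rfl⟩, hn⟩ := hφM
  exact key n φ hφ hn
end
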